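/- Let Q be a finite quiver and a ≠ b two distinct arrows. Then Hom_{KQ}(C(a), C(b)) = 0, where C(a) = KQe_{t(a)}/KQa. -/

import Mathlib

open Quiver

universe w v u

/-- A representation of a quiver `V` over a field `K`: a vector space at each vertex
and a linear map for each arrow. -/
structure QRep (K : Type u) [Field K] (V : Type v) [Quiver.{v} V] where
  space : V → Type w
  [isAddCommGroup : ∀ i, AddCommGroup (space i)]
  [isModule : ∀ i, Module K (space i)]
  map : ∀ {i j : V}, (i ⟶ j) → (space i →ₗ[K] space j)

attribute [instance] QRep.isAddCommGroup QRep.isModule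

/-- A morphism of quiver representations. -/
structure QRepHom {K : Type u} [Field K] {V : Type v} [Quiver.{v} V]
    (X Y : QRep.{w} K V) where
  app : ∀ i, X.space i →ₗ[K] Y.space i
  comm : ∀ {i j : V} (a : i ⟶ j), (Y.map a).comp (app i) = (app j).comp (X.map a)

/-- The projective representation `KQe_i`: at vertex `j` it has basis the paths `i ⟶ j`,
and arrows act by postcomposition. -/
noncomputable def projRep (K : Type u) [Field K] (V : Type v) [Quiver.{v} V] (i : V) :
    QRep.{max u v} K V where
  space j := Path i j →₀ K
  map a := Finsupp.lmapDomain K K (fun p => p.cons a)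

/-- Right multiplication by an arrow `a : i ⟶ j`, as a morphism `KQe_j → KQe_i`. -/
noncomputable def rmulArrow {K : Type u} [Field K] {V : Type v} [Quiver.{v} V]
    {i j : V} (a : i ⟶ j) : QRepHom (projRep K V j) (projRep K V i) where
  app k := Finsupp.lmapDomain K K (fun p : Path j k => (a.toPath).comp p)
  comm := by
    intro k l b
    refine Finsupp.lhom_ext fun p c => ?_
    change Finsupp.mapDomain _ (Finsupp.mapDomain _ (Finsupp.single p c)) = Finsupp.mapDomain _ (Finsupp.mapDomain _ (Finsupp.single p c))
    simp [Finsupp.mapDomain_single, Quiver.Path.comp_cons]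

/-- The cokernel representation of a morphism of representations. -/
noncomputable def cokerRep {K : Type u} [Field K] {V : Type v} [Quiver.{v} V]
    {F X : QRep.{w} K V} (f : QRepHom F X) : QRep.{w} K V where
  space i := X.space i ⧸ LinearMap.range (f.app i)
  map {i j} a := Submodule.mapQ _ _ (X.map a) (by
    rintro x ⟨y, rfl⟩
    exact ⟨F.map a y, by
      rw [← LinearMap.comp_apply, ← f.comm, LinearMap.comp_apply]⟩)

/-- The projection onto the cokernel representation. -/
noncomputable def cokerProj {K : Type u} [Field K] {V : Type v} [Quiver.{v} V]
    {F X : QRep.{w} K V} (f : QRepHom F X) : QRepHom X (cokerRep f) where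
  app i := (LinearMap.range (f.app i)).mkQ
  comm {i j} a := Submodule.mapQ_mkQ _ _ (h := by
    rintro x ⟨y, rfl⟩
    exact ⟨F.map a y, by
      rw [← LinearMap.comp_apply, ← f.comm, LinearMap.comp_apply]⟩)

/-- The representation `C(a) = KQe_{t(a)}/KQa` for an arrow `a : i ⟶ j`. -/
noncomputable def Ca {K : Type u} [Field K] {V : Type v} [Quiver.{v} V]
    {i j : V} (a : i ⟶ j) : QRep.{max u v} K V :=
  cokerRep (rmulArrow (K := K) a)

/-- `Hom(A,B) = 0` in the category of representations. -/
def HomVanishes {K : Type u} [Field K] {V : Type v} [Quiver.{v} V]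
    (A B : QRep.{w} K V) : Prop :=
  ∀ θ : QRepHom A B, ∀ (k : V) (x : A.space k), θ.app k x = 0

/-- `u, v` form a short exact sequence `0 → X → E → Z → 0` of representations. -/
def IsSES {K : Type u} [Field K] {V : Type v} [Quiver.{v} V]
    {X E Z : QRep.{w} K V} (u : QRepHom X E) (v : QRepHom E Z) : Prop :=
  ∀ k : V, Function.Injective (u.app k) ∧ Function.Surjective (v.app k) ∧
    LinearMap.range (u.app k) = LinearMap.ker (v.app k)

/-- `Ext¹(Z,X) = 0`: every short exact sequence `0 → X → E → Z → 0` of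
representations splits. -/
def ExtVanishes {K : Type u} [Field K] {V : Type v} [Quiver.{v} V]
    (Z X : QRep.{w} K V) : Prop :=
  ∀ (E : QRep.{w} K V) (u : QRepHom X E) (v : QRepHom E Z), IsSES u v →
    ∃ s : QRepHom Z E, ∀ k : V, (v.app k).comp (s.app k) = LinearMap.id

/-!
`C(a)` is generated at the source of `a` by the class `e` of the trivial path, and `a · e`, the
class of `a`, is zero. A morphism `θ : C(a) → C(b)` therefore sends `e` to an element killed by `a`. But `a` acts
injectively on `C(b)` when `a ≠ b`: if `p a` lies in `KQb`, the path `p a` starts with `b`, and since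
`p a ≠ b` the path `p` already starts with `b`. Hence `θ e = 0`, and so `θ = 0`.
-/

namespace Quiver.Path

variable {V : Type v} [Quiver.{v} V]

lemma cons_injective {i j k : V} (a : i ⟶ j) :
    Function.Injective fun p : Path k i => p.cons a :=
  fun _ _ h => eq_of_heq (heq_of_cons_eq_cons h)

lemma exists_eq_toPath_comp_of_cons_eq {i₁ j₁ i₂ j₂ : V} {a : i₁ ⟶ j₁} {b : i₂ ⟶ j₂}
    (hab : (⟨i₁, j₁, a⟩ : Σ i j : V, i ⟶ j) ≠ ⟨i₂, j₂, b⟩)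
    {p : Path i₂ i₁} {q : Path j₂ j₁} (h : p.cons a = b.toPath.comp q) :
    ∃ q' : Path j₂ i₁, p = b.toPath.comp q' := by
  cases q with
  | nil =>
    obtain rfl : i₁ = i₂ := obj_eq_of_cons_eq_cons h
    exact absurd (by rw [eq_of_heq (hom_heq_of_cons_eq_cons h)]) hab
  | cons q c =>
    obtain rfl := obj_eq_of_cons_eq_cons h
    exact ⟨q, eq_of_heq (heq_of_cons_eq_cons h)⟩

end Quiver.Path

section

variable {K : Type u} [Field K] {V : Type v} [Quiver.{v} V]

def QRepHom.comp {X Y Z : QRep.{w} K V} (g : QRepHom Y Z) (f : QRepHom X Y) : QRepHom X Z where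
  app i := (g.app i).comp (f.app i)
  comm a := by rw [← LinearMap.comp_assoc, g.comm, LinearMap.comp_assoc, f.comm,
    LinearMap.comp_assoc]

lemma QRepHom.comm_apply {X Y : QRep.{w} K V} (θ : QRepHom X Y) {i j : V} (a : i ⟶ j)
    (x : X.space i) : Y.map a (θ.app i x) = θ.app j (X.map a x) :=
  LinearMap.congr_fun (θ.comm a) x

lemma projRep_map_single {i j l : V} (c : j ⟶ l) (p : Path i j) (r : K) :
    (projRep K V i).map c (Finsupp.single p r) = Finsupp.single (p.cons c) r :=
  Finsupp.mapDomain_single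

lemma QRepHom.app_eq_zero_of_app_single_nil {i : V} {Y : QRep.{max u v} K V}
    (θ : QRepHom (projRep K V i) Y) (h : θ.app i (Finsupp.single Path.nil 1) = 0)
    (k : V) (x : Path i k →₀ K) : θ.app k x = 0 := by
  have hsingle : ∀ {l : V} (p : Path i l), θ.app l (Finsupp.single p 1) = 0 := by
    intro l p
    induction p with
    | nil => exact h
    | cons p c ih =>
      rw [← projRep_map_single, ← θ.comm_apply c (Finsupp.single p 1), ih, map_zero]
  -- `projRep`'s linear structure is `Finsupp`'s only up to unfolding `projRep`, hence `erw`.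
  have hθ : (θ.app k : (Path i k →₀ K) →ₗ[K] Y.space k) = 0 := Finsupp.lhom_ext fun p r => by
    erw [← Finsupp.smul_single_one, map_smul, hsingle, smul_zero]; rfl
  exact LinearMap.congr_fun hθ x

lemma range_rmulArrow_app {i j : V} (b : i ⟶ j) (k : V) :
    LinearMap.range ((rmulArrow (K := K) b).app k) =
      Finsupp.supported K K (Set.range fun q : Path j k => b.toPath.comp q) := by
  erw [LinearMap.range_eq_map, ← Finsupp.supported_univ, Finsupp.lmapDomain_supported,
    Set.image_univ]

lemma Ca_map_mk {i j k l : V} (b : i ⟶ j) (c : k ⟶ l) (y : Path i k →₀ K) :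
    (Ca (K := K) b).map c (Submodule.Quotient.mk y) =
      Submodule.Quotient.mk (Finsupp.mapDomain (fun p => p.cons c) y) :=
  rfl

lemma Ca_map_self_mk_single_nil {i j : V} (a : i ⟶ j) :
    (Ca (K := K) a).map a (Submodule.Quotient.mk (Finsupp.single Path.nil 1)) = 0 := by
  erw [Ca_map_mk, Finsupp.mapDomain_single, Submodule.Quotient.mk_eq_zero]
  exact ⟨Finsupp.single Path.nil 1, Finsupp.mapDomain_single⟩

lemma Ca_map_injective {i₁ j₁ i₂ j₂ : V} {a : i₁ ⟶ j₁} {b : i₂ ⟶ j₂}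
    (hab : (⟨i₁, j₁, a⟩ : Σ i j : V, i ⟶ j) ≠ ⟨i₂, j₂, b⟩) :
    Function.Injective ((Ca (K := K) b).map a) := by
  rw [← LinearMap.ker_eq_bot, LinearMap.ker_eq_bot']
  intro x hx
  obtain ⟨y, rfl⟩ := Submodule.Quotient.mk_surjective _ x
  erw [Ca_map_mk, Submodule.Quotient.mk_eq_zero, range_rmulArrow_app, Finsupp.mem_supported] at hx
  erw [Submodule.Quotient.mk_eq_zero, range_rmulArrow_app, Finsupp.mem_supported]
  intro p hp
  have hpa : p.cons a ∈ (Finsupp.mapDomain (fun p : Path i₂ i₁ => p.cons a) y).support := by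
    erw [Finsupp.mem_support_iff, Finsupp.mapDomain_apply (Path.cons_injective a),
      ← Finsupp.mem_support_iff]
    exact hp
  obtain ⟨q, hq⟩ := hx hpa
  obtain ⟨q', rfl⟩ := Path.exists_eq_toPath_comp_of_cons_eq hab hq.symm
  exact ⟨q', rfl⟩

end

/-- For distinct arrows `a ≠ b` of a finite quiver, `Hom(C(a), C(b)) = 0`. -/
theorem hom_Ca_Cb_eq_zero {K : Type u} [Field K] {V : Type v} [Quiver.{v} V]
    [Fintype V] [∀ i j : V, Fintype (i ⟶ j)]
    {i₁ j₁ i₂ j₂ : V} (a : i₁ ⟶ j₁) (b : i₂ ⟶ j₂)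
    (hab : (⟨i₁, j₁, a⟩ : Σ i j : V, i ⟶ j) ≠ ⟨i₂, j₂, b⟩) :
    HomVanishes (Ca (K := K) a) (Ca (K := K) b) := by
  intro θ k x
  obtain ⟨y, rfl⟩ := Submodule.Quotient.mk_surjective _ x
  have hgen : θ.app i₁ (Submodule.Quotient.mk (Finsupp.single Path.nil 1)) = 0 :=
    Ca_map_injective hab <| by erw [θ.comm_apply, Ca_map_self_mk_single_nil, map_zero, map_zero]
  exact (θ.comp (cokerProj _)).app_eq_zero_of_app_single_nil hgen k y
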